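/- arXiv:1306.6511 — 5 statements merged into one kernel-verified Lean document; each statement's English description precedes it below -/
import Mathlib

section
/- For all n ≥ 1, ⟨n⟩ = Σ_{k≥0} (n/(n-k)) C(n-k, k) s^{n-2k} t^k as polynomials in s,t. -/
/-- Generalized Fibonacci polynomials: {0}=0, {1}=1, {n}=s{n-1}+t{n-2}. -/
def gfib {R : Type*} [CommRing R] (s t : R) : ℕ → R
  | 0 => 0
  | 1 => 1
  | n + 2 => s * gfib s t (n + 1) + t * gfib s t n

/-- Generalized Lucas polynomials: ⟨0⟩=2, ⟨1⟩=s, ⟨n⟩=s⟨n-1⟩+t⟨n-2⟩. -/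
def gluc {R : Type*} [CommRing R] (s t : R) : ℕ → R
  | 0 => 2
  | 1 => s
  | n + 2 => s * gluc s t (n + 1) + t * gluc s t n


/-!
With `F` the generalized Fibonacci polynomials, `⟨n + 1⟩ = F (n + 2) + t F n` (both sides satisfy
the recurrence), and Pascal's rule gives `F (n + 1) = ∑ C(n-k, k) s^(n-2k) t^k`. Matching the terms
of `⟨n⟩ = F (n + 1) + t F (n - 1)` then comes down to
`n / (n - k) C(n-k, k) = C(n-k, k) + C(n-k-1, k-1)`, a rewriting of
`k C(n-k, k) = (n - k) C(n-k-1, k-1)`.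
-/

open Finset

theorem Nat.add_add_two_mul_choose (m k : ℕ) :
    (k + m + 2) * (m + 1).choose (k + 1) = (m + 1) * ((m + 1).choose (k + 1) + m.choose k) := by
  linear_combination (Nat.add_one_mul_choose_eq m k).symm

section CommRing

variable {R : Type*} [CommRing R] (s t : R)

theorem gluc_succ_eq_gfib (n : ℕ) : gluc s t (n + 1) = gfib s t (n + 2) + t * gfib s t n := by
  induction n using Nat.twoStepInduction with
  | zero => simp [gluc, gfib]
  | one => simp [gluc, gfib]; ring
  | more n ih₀ ih₁ =>
    rw [gluc.eq_3, ih₀, ih₁, gfib.eq_3 s t (n + 2), gfib.eq_3 s t (n + 1), gfib.eq_3 s t n]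
    ring

/-- The exponent `n - 2 * k` truncates only where `n - k < k`, and there the binomial vanishes. -/
def fibTerm (n k : ℕ) : R := ((n - k).choose k : R) * s ^ (n - 2 * k) * t ^ k

theorem fibTerm_zero_right (n : ℕ) : fibTerm s t n 0 = s ^ n := by
  simp [fibTerm]

theorem fibTerm_eq_zero {n k : ℕ} (h : n - k < k) : fibTerm s t n k = 0 := by
  simp [fibTerm, Nat.choose_eq_zero_of_lt h]

theorem fibTerm_add_two_succ (n k : ℕ) :
    fibTerm s t (n + 2) (k + 1) = s * fibTerm s t (n + 1) (k + 1) + t * fibTerm s t n k := by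
  rcases lt_or_ge n (2 * k + 1) with h | h
  · have hk : n - k < k + 1 := by omega
    rw [fibTerm_eq_zero s t (n := n + 1) (by omega)]
    obtain hn | hn := lt_or_ge n k
    · rw [fibTerm_eq_zero s t (by omega), fibTerm_eq_zero s t (by omega)]
      ring
    · simp only [fibTerm]
      rw [show n + 2 - (k + 1) = n - k + 1 by omega, Nat.choose_succ_succ',
        Nat.choose_eq_zero_of_lt hk, show n + 2 - 2 * (k + 1) = n - 2 * k by omega]
      push_cast
      ring
  · simp only [fibTerm]
    rw [show n + 2 - (k + 1) = n - k + 1 by omega, Nat.choose_succ_succ',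
      show n + 1 - (k + 1) = n - k by omega, show n + 2 - 2 * (k + 1) = n - 2 * k by omega,
      show n - 2 * k = n + 1 - 2 * (k + 1) + 1 by omega]
    push_cast
    ring

theorem sum_range_succ_fibTerm (n : ℕ) :
    ∑ k ∈ range (n + 2), fibTerm s t n k = ∑ k ∈ range (n + 1), fibTerm s t n k := by
  rw [sum_range_succ, fibTerm_eq_zero s t (by omega), add_zero]

theorem gfib_succ_eq_sum (n : ℕ) : gfib s t (n + 1) = ∑ k ∈ range (n + 1), fibTerm s t n k := by
  induction n using Nat.twoStepInduction with
  | zero => simp [gfib, fibTerm]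
  | one => simp [gfib, fibTerm, sum_range_succ]
  | more n ih₀ ih₁ =>
    rw [gfib, ih₀, ih₁, ← sum_range_succ_fibTerm s t n, ← sum_range_succ_fibTerm s t (n + 1),
      sum_range_succ' (fibTerm s t (n + 2)), sum_range_succ' (fibTerm s t (n + 1))]
    simp only [fibTerm_add_two_succ, sum_add_distrib, ← mul_sum, fibTerm_zero_right]
    ring

end CommRing

section Field

variable {K : Type*} [Field K] (s t : K)

/-- At `k = n` the quotient is the junk value `n / 0 = 0`; harmless, as then `C(0, n) = 0`
for `n ≠ 0`. -/
def lucTerm (n k : ℕ) : K :=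
  ((n : K) / ((n : K) - (k : K))) * ((n - k).choose k : K) * s ^ (n - 2 * k) * t ^ k

theorem lucTerm_eq_mul_fibTerm (n k : ℕ) :
    lucTerm s t n k = (n : K) / ((n : K) - (k : K)) * fibTerm s t n k := by
  simp only [lucTerm, fibTerm]
  ring

theorem lucTerm_eq_zero {n k : ℕ} (h : n - k < k) : lucTerm s t n k = 0 := by
  simp [lucTerm_eq_mul_fibTerm, fibTerm_eq_zero s t h]

variable [CharZero K]

theorem lucTerm_zero_right {n : ℕ} (hn : n ≠ 0) : lucTerm s t n 0 = s ^ n := by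
  simp [lucTerm_eq_mul_fibTerm, fibTerm_zero_right, hn]

theorem lucTerm_add_two_succ (n k : ℕ) :
    lucTerm s t (n + 2) (k + 1) = fibTerm s t (n + 2) (k + 1) + t * fibTerm s t n k := by
  obtain h | h := lt_or_ge n k
  · rw [lucTerm_eq_zero s t (by omega), fibTerm_eq_zero s t (by omega),
      fibTerm_eq_zero s t (by omega)]
    ring
  obtain ⟨m, rfl⟩ := Nat.exists_eq_add_of_le h
  have hm : ((k + m + 2 : ℕ) : K) - ((k + 1 : ℕ) : K) = m + 1 := by push_cast; ring
  have key : ((k + m + 2 : ℕ) : K) / (m + 1) * (m + 1).choose (k + 1) =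
      (m + 1).choose (k + 1) + m.choose k := by
    rw [div_mul_eq_mul_div, div_eq_iff (Nat.cast_add_one_ne_zero m)]
    exact_mod_cast (Nat.add_add_two_mul_choose m k).trans (mul_comm _ _)
  rw [lucTerm_eq_mul_fibTerm, hm]
  simp only [fibTerm, show k + m + 2 - (k + 1) = m + 1 by omega, show k + m - k = m by omega,
    show k + m + 2 - 2 * (k + 1) = k + m - 2 * k by omega]
  linear_combination (s ^ (k + m - 2 * k) * t ^ (k + 1)) * key

theorem gluc_eq_sum_lucTerm {n : ℕ} (hn : n ≠ 0) :
    gluc s t n = ∑ k ∈ range (n + 1), lucTerm s t n k := by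
  obtain _ | _ | n := n
  · exact absurd rfl hn
  · simp [gluc, lucTerm, sum_range_succ]
  · rw [gluc_succ_eq_gfib, gfib_succ_eq_sum, gfib_succ_eq_sum, ← sum_range_succ_fibTerm s t n,
      sum_range_succ' (fibTerm s t (n + 2)), sum_range_succ' (lucTerm s t (n + 2)),
      lucTerm_zero_right s t (by omega), fibTerm_zero_right]
    simp only [lucTerm_add_two_succ, sum_add_distrib, ← mul_sum]
    ring

end Field

theorem stmt2 (s t : ℝ) (n : ℕ) (hn : 1 ≤ n) :
    gluc s t n =
      ∑ k ∈ Finset.range (n / 2 + 1),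
        ((n : ℝ) / ((n : ℝ) - (k : ℝ))) * ((n - k).choose k : ℝ) * s ^ (n - 2 * k) * t ^ k := by
  rw [gluc_eq_sum_lucTerm s t (by omega)]
  refine (sum_subset (range_subset_range.2 (by omega)) fun k _ hk => ?_).symm
  exact lucTerm_eq_zero s t (by simp at hk; omega)
end

section
/- For m, n ≥ 1, gcd({m}, {n}) = {gcd(m,n)} in the polynomial ring ℤ[s,t]; in particular m divides n if and only if {m} divides {n}. -/
/-!
When `s` and `t` are coprime, consecutive terms `{n}, {n+1}` are coprime, and so is `{n+1}`
with `t`. The addition formula `{m+n+1} = {m+1}{n+1} + t{m}{n}` then shows that modulo any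
divisor of `{m}` the index of `{n}` may be shifted by `m`, so common divisors of `{m}` and `{n}`
follow the Euclidean algorithm on the indices. For the converse divisibility, specialising
`s = 2, t = -1` turns `{n}` into `n`.
-/

section GeneralizedFibonacci

variable {R : Type*} [CommRing R] (s t : R)

theorem gfib_add (m n : ℕ) :
    gfib s t (m + n + 1) = gfib s t (m + 1) * gfib s t (n + 1) + t * gfib s t m * gfib s t n := by
  induction n using Nat.twoStepInduction with
  | zero => simp [gfib]
  | one => simp only [gfib]; ring
  | more n ih₁ ih₂ =>
    rw [show m + (n + 2) + 1 = m + n + 1 + 2 by ring, gfib, ih₁,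
      show m + n + 1 + 1 = m + (n + 1) + 1 by ring, ih₂]
    simp only [gfib]
    ring

theorem map_gfib {S : Type*} [CommRing S] (f : R →+* S) (n : ℕ) :
    f (gfib s t n) = gfib (f s) (f t) n := by
  induction n using Nat.twoStepInduction with
  | zero => simp [gfib]
  | one => simp [gfib]
  | more n ih₁ ih₂ => simp only [gfib, map_add, map_mul, ih₁, ih₂]

theorem gfib_two_neg_one (n : ℕ) : gfib (2 : R) (-1) n = n := by
  induction n using Nat.twoStepInduction with
  | zero => simp [gfib]
  | one => simp [gfib]
  | more n ih₁ ih₂ => rw [gfib, ih₁, ih₂]; push_cast; ring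

variable {s t}

theorem dvd_of_gfib_dvd_gfib (f : R →+* ℤ) (hs : f s = 2) (ht : f t = -1) {m n : ℕ}
    (h : gfib s t m ∣ gfib s t n) : m ∣ n := by
  have := map_dvd f h
  rwa [map_gfib, map_gfib, hs, ht, gfib_two_neg_one, gfib_two_neg_one,
    Int.natCast_dvd_natCast] at this

variable [DecompositionMonoid R] (hst : IsRelPrime s t)
include hst

theorem isRelPrime_gfib_succ_t (n : ℕ) : IsRelPrime (gfib s t (n + 1)) t := by
  induction n with
  | zero => exact isRelPrime_one_left
  | succ n ih =>
    rw [gfib, IsRelPrime.add_mul_left_left_iff]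
    exact hst.mul_left ih

theorem isRelPrime_gfib_gfib_succ (n : ℕ) : IsRelPrime (gfib s t n) (gfib s t (n + 1)) := by
  induction n with
  | zero => exact isRelPrime_one_right
  | succ n ih =>
    rw [gfib, IsRelPrime.mul_add_right_right_iff]
    exact (isRelPrime_gfib_succ_t hst n).mul_right ih.symm

theorem dvd_gfib_add_iff {d : R} {m : ℕ} (hd : d ∣ gfib s t m) (n : ℕ) :
    d ∣ gfib s t (m + n) ↔ d ∣ gfib s t n := by
  obtain _ | k := m
  · simp
  have hcop : IsRelPrime (gfib s t (k + 1)) (t * gfib s t k) :=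
    (isRelPrime_gfib_succ_t hst k).mul_right (isRelPrime_gfib_gfib_succ hst k).symm
  rw [add_right_comm, gfib_add, (dvd_add_right (hd.mul_right _)).eq]
  exact ⟨(hcop.of_dvd_left hd).dvd_of_dvd_mul_left, fun h => h.mul_left _⟩

theorem dvd_gfib_add_mul_iff {d : R} {m : ℕ} (hd : d ∣ gfib s t m) (n q : ℕ) :
    d ∣ gfib s t (n + m * q) ↔ d ∣ gfib s t n := by
  induction q with
  | zero => simp
  | succ q ih => rw [mul_add_one, ← add_assoc, add_comm, dvd_gfib_add_iff hst hd, ih]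

theorem dvd_gfib_gcd_iff (m n : ℕ) (d : R) :
    (d ∣ gfib s t m ∧ d ∣ gfib s t n) ↔ d ∣ gfib s t (Nat.gcd m n) := by
  induction m, n using Nat.gcd.induction with
  | H0 n => simp [gfib]
  | H1 m n _ ih =>
    rw [Nat.gcd_rec, ← ih, and_comm, and_congr_left_iff]
    exact fun hd => by rw [← dvd_gfib_add_mul_iff hst hd (n % m) (n / m), Nat.mod_add_div]

end GeneralizedFibonacci

open MvPolynomial in
theorem stmt6_general (m n : ℕ) :
    (∀ d : MvPolynomial (Fin 2) ℤ,
      (d ∣ gfib (X 0) (X 1) m ∧ d ∣ gfib (X 0) (X 1) n) ↔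
        d ∣ gfib (X 0) (X 1) (Nat.gcd m n)) ∧
    (m ∣ n ↔ gfib (X 0 : MvPolynomial (Fin 2) ℤ) (X 1) m ∣ gfib (X 0) (X 1) n) := by
  have hst : IsRelPrime (X 0 : MvPolynomial (Fin 2) ℤ) (X 1) :=
    X_prime.irreducible.isRelPrime_iff_not_dvd.mpr (by simp [X_dvd_X])
  refine ⟨dvd_gfib_gcd_iff hst m n, fun h => ?_,
    dvd_of_gfib_dvd_gfib (eval ![2, -1]) (by simp) (by simp)⟩
  exact ((dvd_gfib_gcd_iff hst m n _).mpr (by rw [Nat.gcd_eq_left h])).2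

open MvPolynomial in
theorem stmt6 (m n : ℕ) (hm : 1 ≤ m) (hn : 1 ≤ n) :
    (∀ d : MvPolynomial (Fin 2) ℤ,
      (d ∣ gfib (X 0) (X 1) m ∧ d ∣ gfib (X 0) (X 1) n) ↔
        d ∣ gfib (X 0) (X 1) (Nat.gcd m n)) ∧
    (m ∣ n ↔ gfib (X 0 : MvPolynomial (Fin 2) ℤ) (X 1) m ∣ gfib (X 0) (X 1) n) :=
  stmt6_general m n
end

section
/- For all n ≥ 0, Σ_{k=0}^{n} C(n,k) {k}_{s,t} = {n}_{s+2, t-s-1}, as polynomials in s,t. -/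
open Finset

def binomialTransform {R : Type*} [NonAssocSemiring R] (g : ℕ → R) (n : ℕ) : R :=
  ∑ k ∈ range (n + 1), (n.choose k : R) * g k

section BinomialTransform

variable {R : Type*}

theorem binomialTransform_succ [NonAssocSemiring R] (g : ℕ → R) (n : ℕ) :
    binomialTransform g (n + 1) = binomialTransform g n + binomialTransform (fun k ↦ g (k + 1)) n :=
  sum_choose_succ_mul (fun k _ ↦ g k) n

theorem binomialTransform_linear_comb [CommSemiring R] {g₁ g₂ h : ℕ → R} (a b : R)
    (hh : ∀ k, h k = a * g₁ k + b * g₂ k) (n : ℕ) :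
    binomialTransform h n = a * binomialTransform g₁ n + b * binomialTransform g₂ n := by
  simp only [binomialTransform, mul_sum, ← sum_add_distrib, hh]
  exact sum_congr rfl fun _ _ ↦ by ring

theorem binomialTransform_add_two_of_rec [CommRing R] {g : ℕ → R} {s t : R}
    (hg : ∀ k, g (k + 2) = s * g (k + 1) + t * g k) (n : ℕ) :
    binomialTransform g (n + 2) =
      (s + 2) * binomialTransform g (n + 1) + (t - s - 1) * binomialTransform g n := by
  have hshift₂ := binomialTransform_linear_comb (h := fun k ↦ g (k + 1 + 1)) s t hg n
  rw [binomialTransform_succ, binomialTransform_succ, binomialTransform_succ, hshift₂]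
  ring

end BinomialTransform

theorem eq_gfib_of_rec {R : Type*} [CommRing R] {f : ℕ → R} {s t : R} (h0 : f 0 = 0)
    (h1 : f 1 = 1) (hf : ∀ n, f (n + 2) = s * f (n + 1) + t * f n) (n : ℕ) :
    f n = gfib s t n := by
  induction n using Nat.twoStepInduction with
  | zero => exact h0
  | one => exact h1
  | more n ih₀ ih₁ => rw [hf, ih₀, ih₁, gfib]

theorem stmt9 {R : Type*} [CommRing R] (s t : R) (n : ℕ) :
    ∑ k ∈ Finset.range (n + 1), (n.choose k : R) * gfib s t k =
      gfib (s + 2) (t - s - 1) n :=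
  eq_gfib_of_rec (f := binomialTransform (gfib s t)) (by simp [binomialTransform, gfib])
    (by simp [binomialTransform, sum_range_succ, gfib])
    (binomialTransform_add_two_of_rec fun _ ↦ rfl) n
end

section
/- For any integer d ≥ 2 and all n ≥ 1, ν_d({n}_{d,-1}) = 0 if n is odd, and ν_d({n}_{d,-1}) = ν_d(d·n/2) if n is even. -/
/-! With `A = !![d, -1; 1, 0]` we have `A ^ n 1 0 = G n` and `A ^ 2 = d • A - 1`, so
`G (2m) = ∑ₖ C(m, k) dᵏ (-1)^(m-k) G k`. The `k = 1` term is `±dm`, and every other term is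
divisible by `d ^ (ν_d(m) + 2)`: comparing `C(m, k)` with `m` costs at most the `p`-part of `k`
for each prime `p`, which is more than paid for by `dᵏ` (together with `d ∣ G k` for even `k`).
Hence `ν_d(G (2m)) = ν_d(dm)`. For odd indices, `G (2k+1) ≡ (-1)ᵏ mod d`. -/

open Finset

section Recurrence

variable {R : Type*} [CommRing R] (s t : R)

theorem gfib_companion_pow (n : ℕ) :
    !![s, t; 1, 0] ^ n =
      !![gfib s t (n + 1), t * gfib s t n; gfib s t n, gfib s t (n + 1) - s * gfib s t n] := by
  induction n with
  | zero => ext i j; fin_cases i <;> fin_cases j <;> simp [gfib]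
  | succ n ih =>
    rw [pow_succ', ih]
    ext i j; fin_cases i <;> fin_cases j <;> simp [gfib]; ring

theorem gfib_companion_sq : !![s, t; 1, 0] ^ 2 = s • !![s, t; 1, 0] + t • 1 := by
  ext i j; fin_cases i <;> fin_cases j <;> simp [sq]

theorem gfib_two_mul (m : ℕ) :
    gfib s t (2 * m) = ∑ k ∈ range (m + 1), m.choose k * s ^ k * t ^ (m - k) * gfib s t k := by
  have hcomm : Commute (s • !![s, t; 1, 0]) (t • 1 : Matrix (Fin 2) (Fin 2) R) :=
    (Commute.one_right _).smul_right t
  have hfib (n : ℕ) : gfib s t n = (!![s, t; 1, 0] ^ n) 1 0 := by simp [gfib_companion_pow]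
  rw [hfib (2 * m), pow_mul, gfib_companion_sq, hcomm.add_pow, Matrix.sum_apply]
  refine sum_congr rfl fun k _ => ?_
  rw [smul_pow, smul_pow, one_pow, ← Nat.cast_comm, ← nsmul_eq_mul]
  simp only [Matrix.mul_smul, mul_one, Matrix.smul_apply, ← hfib, smul_eq_mul,
    nsmul_eq_mul]
  ring

theorem dvd_gfib_two_mul (k : ℕ) : s ∣ gfib s t (2 * k) := by
  induction k with
  | zero => simp [gfib]
  | succ k ih => exact dvd_add (dvd_mul_right _ _) (ih.mul_left t)

theorem dvd_gfib_two_mul_add_one_sub_pow (k : ℕ) : s ∣ gfib s t (2 * k + 1) - t ^ k := by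
  induction k with
  | zero => simp [gfib]
  | succ k ih =>
    have : gfib s t (2 * (k + 1) + 1) - t ^ (k + 1) =
        s * gfib s t (2 * k + 2) + t * (gfib s t (2 * k + 1) - t ^ k) := by
      rw [show 2 * (k + 1) + 1 = 2 * k + 1 + 2 by ring, gfib]; ring
    rw [this]
    exact dvd_add (dvd_mul_right _ _) (ih.mul_left t)

end Recurrence

namespace Nat

theorem pow_add_dvd_choose_mul_pow {d m K i j : ℕ} (hK : d ^ K ∣ m) (hj : j ≠ 0)
    (hi : ∀ p, j.factorization p + i ≤ j) : d ^ (K + i) ∣ m.choose j * d ^ j := by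
  rcases eq_or_ne d 0 with rfl | hd
  · simp [zero_pow hj]
  rcases eq_or_ne (m.choose j) 0 with hC | hC
  · simp [hC]
  have hjm : j ≤ m := not_lt.1 fun h => hC (choose_eq_zero_of_lt h)
  rw [← factorization_le_iff_dvd (by positivity) (by positivity)]
  intro p
  have hm : m * (m - 1).choose (j - 1) = m.choose j * j := by
    have := add_one_mul_choose_eq (m - 1) (j - 1)
    rwa [Nat.sub_add_cancel (by omega), Nat.sub_add_cancel (by omega)] at this
  have hmC := congrArg (·.factorization p) hm
  have hKm := (factorization_le_iff_dvd (by positivity) (by omega)).2 hK p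
  rw [factorization_mul (by omega) (choose_pos (by omega : j - 1 ≤ m - 1)).ne',
    factorization_mul hC hj] at hmC
  rw [factorization_mul hC (by positivity)]
  simp only [factorization_pow, Finsupp.add_apply, Finsupp.smul_apply, smul_eq_mul] at hmC hKm ⊢
  rcases Nat.eq_zero_or_pos (d.factorization p) with he | he
  · simp [he]
  have h1 := Nat.mul_le_mul_right (d.factorization p) (hi p)
  have h2 := Nat.le_mul_of_pos_right (j.factorization p) he
  nlinarith

theorem factorization_add_two_le_of_odd {j : ℕ} (hj : Odd j) (hj1 : j ≠ 1) (p : ℕ) :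
    j.factorization p + 2 ≤ j := by
  have hj3 : 3 ≤ j := by obtain ⟨r, rfl⟩ := hj; omega
  rcases eq_or_ne (j.factorization p) 0 with h0 | hpos
  · omega
  have hp : p.Prime := prime_of_mem_primeFactors <|
    support_factorization j ▸ Finsupp.mem_support_iff.2 hpos
  have hp3 : 3 ≤ p := by
    rcases hp.eq_two_or_odd' with rfl | hodd
    · exact absurd (factorization_eq_zero_of_not_dvd (hj.not_two_dvd_nat)) hpos
    · obtain ⟨r, rfl⟩ := hodd; have := hp.two_le; omega
  calc j.factorization p + 2 ≤ 3 * j.factorization p := by omega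
    _ ≤ 3 ^ j.factorization p := mul_le_pow (by norm_num) _
    _ ≤ p ^ j.factorization p := Nat.pow_le_pow_left hp3 _
    _ ≤ j := ordProj_le p (by omega)

end Nat

theorem padicValInt_eq_of_pow_dvd_sub {d : ℕ} (hd : d ≠ 1) {x y : ℤ} (hy : y ≠ 0)
    (h : (d : ℤ) ^ (padicValInt d y + 1) ∣ x - y) : padicValInt d x = padicValInt d y := by
  have hy' : ¬ (d : ℤ) ^ (padicValInt d y + 1) ∣ y := by
    rw [padicValInt_dvd_iff_of_ne_one hd]
    omega
  have hx : (d : ℤ) ^ padicValInt d y ∣ x := by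
    simpa using dvd_add ((pow_dvd_pow _ (Nat.le_succ _)).trans h) (padicValInt_dvd y)
  rcases (padicValInt_dvd_iff_of_ne_one hd _ x).1 hx with rfl | hle
  · exact absurd (by simpa using h) hy'
  refine le_antisymm (not_lt.1 fun hlt => hy' ?_) hle
  exact (dvd_sub_right ((pow_dvd_pow _ hlt).trans (padicValInt_dvd x))).1 h

theorem padicValInt_neg_one_pow_mul (d k : ℕ) (x : ℤ) :
    padicValInt d ((-1) ^ k * x) = padicValInt d x := by
  simp [padicValInt, Int.natAbs_mul, Int.natAbs_pow]

section SignedFibonacci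

variable {d : ℕ}

theorem padicValInt_gfib_two_mul_add_one (hd : d ≠ 1) (k : ℕ) :
    padicValInt d (gfib (d : ℤ) (-1) (2 * k + 1)) = 0 := by
  refine padicValInt.eq_zero_of_not_dvd fun h => hd ?_
  have hunit : (d : ℤ) ∣ (-1) ^ k :=
    (dvd_sub_right h).1 (dvd_gfib_two_mul_add_one_sub_pow (d : ℤ) (-1) k)
  simpa using Int.natAbs_dvd_natAbs.2 hunit

theorem pow_add_two_dvd_choose_mul_pow_mul_gfib {m K k : ℕ} (hK : d ^ K ∣ m) (hk : k ≠ 1) :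
    (d : ℤ) ^ (K + 2) ∣ m.choose k * (d : ℤ) ^ k * gfib (d : ℤ) (-1) k := by
  obtain ⟨r, rfl | rfl⟩ := k.even_or_odd'
  · rcases eq_or_ne r 0 with rfl | hr
    · simp [gfib]
    have h : d ^ (K + 1) ∣ m.choose (2 * r) * d ^ (2 * r) :=
      Nat.pow_add_dvd_choose_mul_pow hK (by omega) fun p => Nat.factorization_lt p (by omega)
    rw [pow_succ]
    exact mul_dvd_mul (by exact_mod_cast h) (dvd_gfib_two_mul _ _ r)
  · have h : d ^ (K + 2) ∣ m.choose (2 * r + 1) * d ^ (2 * r + 1) :=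
      Nat.pow_add_dvd_choose_mul_pow hK (by omega)
        (Nat.factorization_add_two_le_of_odd (odd_two_mul_add_one r) hk)
    exact dvd_mul_of_dvd_left (by exact_mod_cast h) _

theorem padicValInt_gfib_two_mul (hd : d ≠ 1) {m : ℕ} (hm : m ≠ 0) :
    padicValInt d (gfib (d : ℤ) (-1) (2 * m)) = padicValInt d (d * m) := by
  rcases eq_or_ne d 0 with rfl | hd0
  · simp [zero_dvd_iff.1 (dvd_gfib_two_mul (0 : ℤ) (-1) m)]
  have hdm : (d : ℤ) * m ≠ 0 := by positivity
  obtain ⟨K, hvK, hK⟩ : ∃ K, padicValInt d (d * m) = K + 1 ∧ d ^ K ∣ m := by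
    have hv := ((padicValInt_dvd_iff_of_ne_one hd 1 ((d : ℤ) * m)).1 (by simp)).resolve_left hdm
    refine ⟨padicValInt d (d * m) - 1, by omega, ?_⟩
    have h : (d : ℤ) ^ (padicValInt d (d * m) - 1) * d ∣ m * d := by
      rw [← pow_succ, Nat.sub_add_cancel hv, mul_comm (m : ℤ)]
      exact padicValInt_dvd _
    exact_mod_cast (mul_dvd_mul_iff_right (by positivity)).1 h
  rw [← padicValInt_neg_one_pow_mul d (m - 1) (d * m)]
  refine padicValInt_eq_of_pow_dvd_sub hd (by simpa using hdm) ?_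
  have hsplit : gfib (d : ℤ) (-1) (2 * m) - (-1) ^ (m - 1) * (d * m) =
      ∑ k ∈ (range (m + 1)).erase 1,
        m.choose k * (d : ℤ) ^ k * (-1) ^ (m - k) * gfib (d : ℤ) (-1) k := by
    rw [gfib_two_mul, ← add_sum_erase _ _ (mem_range.2 (by omega : 1 < m + 1))]
    simp only [Nat.choose_one_right, pow_one, gfib, mul_one]
    ring
  rw [padicValInt_neg_one_pow_mul, hvK, hsplit]
  refine dvd_sum fun k hk => ?_
  rw [mul_right_comm _ ((-1 : ℤ) ^ (m - k))]
  exact dvd_mul_of_dvd_left (pow_add_two_dvd_choose_mul_pow_mul_gfib hK (ne_of_mem_erase hk)) _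

end SignedFibonacci

theorem stmt16 (d : ℕ) (hd : 2 ≤ d) (n : ℕ) (hn : 1 ≤ n) :
    (Odd n → padicValInt d (gfib (d : ℤ) (-1) n) = 0) ∧
    (Even n → padicValInt d (gfib (d : ℤ) (-1) n) = padicValInt d ((d : ℤ) * n / 2)) := by
  refine ⟨fun ⟨k, hk⟩ => hk ▸ padicValInt_gfib_two_mul_add_one (by omega) k,
    fun ⟨m, hm⟩ => ?_⟩
  obtain rfl : n = 2 * m := by omega
  rw [padicValInt_gfib_two_mul (by omega) (by omega)]
  push_cast
  rw [mul_left_comm, Int.mul_ediv_cancel_left _ two_ne_zero]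
end

section
/- For r, m, n positive integers and any integers s,t: {rn}·{r(n+m-1)} − {r(n-1)}·{r(n+m)} = (−t)^{r(n-1)}·{r}·{rm}. -/
/-!
The identity is Vajda's identity `{a+k}{a+d} - {a}{a+k+d} = (-t)^a {k}{d}` at `a = r(n-1)`,
`k = r`, `d = rm`. Raising `a` by one multiplies the left side by `-t`: as a function of `k`
the difference of the two sides satisfies the defining recurrence and vanishes at `k = 0, 1`.
-/

section Vajda

variable {R : Type*} [CommRing R] (s t : R)

lemma gfib_add_two (n : ℕ) : gfib s t (n + 2) = s * gfib s t (n + 1) + t * gfib s t n := rfl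

lemma gfib_vajda_succ (a d : ℕ) : ∀ k,
    gfib s t (a + 1 + k) * gfib s t (a + 1 + d) - gfib s t (a + 1) * gfib s t (a + 1 + k + d) =
      -t * (gfib s t (a + k) * gfib s t (a + d) - gfib s t a * gfib s t (a + k + d))
  | 0 => by simp
  | 1 => by
    rw [show a + 1 + 1 = a + 2 by omega, show a + 1 + 1 + d = a + d + 2 by omega,
      show a + 1 + d = a + d + 1 by omega, gfib_add_two, gfib_add_two]
    ring
  | k + 2 => by
    have ih0 := gfib_vajda_succ a d k
    have ih1 := gfib_vajda_succ a d (k + 1)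
    rw [show a + 1 + (k + 1) + d = a + 1 + k + d + 1 by omega,
      show a + (k + 1) + d = a + k + d + 1 by omega] at ih1
    rw [show a + 1 + (k + 2) + d = a + 1 + k + d + 2 by omega,
      show a + (k + 2) + d = a + k + d + 2 by omega]
    simp only [← add_assoc, gfib_add_two] at ih1 ⊢
    linear_combination s * ih1 + t * ih0

theorem gfib_vajda (k d : ℕ) : ∀ a,
    gfib s t (a + k) * gfib s t (a + d) - gfib s t a * gfib s t (a + k + d) =
      (-t) ^ a * gfib s t k * gfib s t d
  | 0 => by simp [gfib]
  | a + 1 => by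
    rw [gfib_vajda_succ, gfib_vajda k d a, pow_succ]
    ring

end Vajda

theorem stmt17_general {R : Type*} [CommRing R] (s t : R) (r m n : ℕ)
    (hn : 1 ≤ n) :
    gfib s t (r * n) * gfib s t (r * (n + m - 1)) -
      gfib s t (r * (n - 1)) * gfib s t (r * (n + m)) =
    (-t) ^ (r * (n - 1)) * gfib s t r * gfib s t (r * m) := by
  obtain ⟨n, rfl⟩ : ∃ n', n = n' + 1 := ⟨n - 1, by omega⟩
  rw [Nat.add_sub_cancel, show n + 1 + m - 1 = n + m by omega, mul_add, mul_add, mul_one,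
    show r * (n + 1 + m) = r * n + r + r * m by ring]
  exact gfib_vajda s t r (r * m) (r * n)

theorem stmt17 {R : Type*} [CommRing R] (s t : R) (r m n : ℕ)
    (hr : 1 ≤ r) (hm : 1 ≤ m) (hn : 1 ≤ n) :
    gfib s t (r * n) * gfib s t (r * (n + m - 1)) -
      gfib s t (r * (n - 1)) * gfib s t (r * (n + m)) =
    (-t) ^ (r * (n - 1)) * gfib s t r * gfib s t (r * m) :=
  stmt17_general s t r m n hn
end
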